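/- arXiv:1108.3659 — 2 statements merged into one kernel-verified Lean document; each statement's English description precedes it below -/
import Mathlib

section
/- For every integer n ≥ 2 and all i, j ∈ {1, …, n−1}, deleting the first peak (the leftmost occurrence of the factor rf) gives a bijection from D_n(i,j) onto the disjoint union of the sets D_{n−1}(s,j) for s = i−1, …, n−1; consequently |D_n(i,j)| = Σ_{s=i−1}^{n−1} |D_{n−1}(s,j)|, where D_{n−1}(0,j) := ∅. -/
/-- A Dyck word: a list of booleans (`true` = rise, `false` = fall) with equally many
rises and falls such that every prefix has at least as many rises as falls. -/
def IsDyckWord (w : List Bool) : Prop :=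
  w.count true = w.count false ∧ ∀ p, p <+: w → p.count false ≤ p.count true

/-- The list of heights of the peaks (occurrences of the factor `rf`) of a word,
from left to right. The height of a peak is the number of rises minus the number
of falls in the prefix ending with the rise of that peak. -/
def peakHeights (w : List Bool) : List ℕ :=
  (List.range w.length).filterMap (fun k =>
    if w[k]? = some true ∧ w[k + 1]? = some false then
      some ((w.take (k + 1)).count true - (w.take (k + 1)).count false)
    else none)

/-- `DyckD n i j` is the set of Dyck paths of semilength `n` whose first peak has
height `i` and whose last peak has height `j`. -/
def DyckD (n i j : ℕ) : Set (List Bool) :=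
  {w | IsDyckWord w ∧ w.count true = n ∧
    (peakHeights w).head? = some i ∧ (peakHeights w).getLast? = some j}

/-- The index of the first peak of a word, i.e. the position of the leftmost
occurrence of the factor `rf`. -/
def firstPeakIdx? (w : List Bool) : Option ℕ :=
  (List.range w.length).find? (fun k => (w[k]? == some true) && (w[k + 1]? == some false))

/-- Delete the first peak, i.e. the leftmost occurrence of the factor `rf`. -/
def deleteFirstPeak (w : List Bool) : List Bool :=
  match firstPeakIdx? w with
  | some k => w.take k ++ w.drop (k + 2)
  | none => w

/-!
A path in `D_n(i,j)` has the form `rⁱ f v`, and deleting its first peak leaves `rⁱ⁻¹ v`, a Dyck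
path of semilength `n - 1` whose first peak has some height `s ≥ i - 1`, and `s ≤ n - 1`.
Conversely, a path `rˢ f v'` with `s ≥ i - 1` is `rⁱ⁻¹ (rˢ⁻⁽ⁱ⁻¹⁾ f v')`, so inserting `rf` after
its `(i-1)`-th rise inverts the deletion. Last peaks agree: since `i < n`, `v` contains a rise
and hence a peak, and the peaks of `v` are raised by `i - 1` in both `rⁱ f v` and `rⁱ⁻¹ v`.
-/

open List

def height (w : List Bool) : ℤ := (w.count true : ℤ) - w.count false

def peakHeightAt? (w : List Bool) (k : ℕ) : Option ℤ :=
  if w[k]? = some true ∧ w[k + 1]? = some false then some (height (w.take (k + 1))) else none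

/-- `peakHeights` computed in `ℤ`: free of truncated subtraction, it shifts additively under
concatenation (`exists_intPeakHeights_append`). -/
def intPeakHeights (w : List Bool) : List ℤ := (range w.length).filterMap (peakHeightAt? w)

lemma height_cons (x : Bool) (w : List Bool) : height (x :: w) = height w + height [x] := by
  cases x <;> simp [height] <;> ring

lemma peakHeightAt?_cons_zero (x : Bool) (w : List Bool) :
    peakHeightAt? (x :: w) 0 = if x = true ∧ w.head? = some false then some 1 else none := by
  cases x <;> simp [peakHeightAt?, height, head?_eq_getElem?]

lemma peakHeightAt?_cons_succ (x : Bool) (w : List Bool) (k : ℕ) :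
    peakHeightAt? (x :: w) (k + 1) = (peakHeightAt? w k).map (· + height [x]) := by
  simp only [peakHeightAt?, getElem?_cons_succ, take_succ_cons, height_cons x (take (k + 1) w)]
  split_ifs <;> rfl

lemma intPeakHeights_cons (x : Bool) (w : List Bool) :
    intPeakHeights (x :: w) = (if x = true ∧ w.head? = some false then [1] else []) ++
      (intPeakHeights w).map (· + height [x]) := by
  unfold intPeakHeights
  rw [length_cons, range_succ_eq_map, filterMap_cons, filterMap_map, peakHeightAt?_cons_zero,
    map_filterMap]
  simp only [Function.comp_def, peakHeightAt?_cons_succ]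
  split_ifs <;> rfl

lemma exists_intPeakHeights_append (a b : List Bool) :
    ∃ l, intPeakHeights (a ++ b) = l ++ (intPeakHeights b).map (· + height a) := by
  induction a with
  | nil => exact ⟨[], by simp [height]⟩
  | cons x a ih =>
    obtain ⟨l, hl⟩ := ih
    rw [cons_append, intPeakHeights_cons, hl, map_append, map_map, ← append_assoc]
    refine ⟨_, congrArg _ (map_congr_left fun z _ => ?_)⟩
    simp only [Function.comp_apply, height_cons x a]
    ring

lemma getLast?_intPeakHeights_append (a : List Bool) {b : List Bool}
    (hb : intPeakHeights b ≠ []) :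
    (intPeakHeights (a ++ b)).getLast? = (intPeakHeights b).getLast?.map (· + height a) := by
  obtain ⟨l, hl⟩ := exists_intPeakHeights_append a b
  rw [hl, getLast?_append_of_ne_nil _ (by simpa using hb), getLast?_map]

lemma head?_intPeakHeights_replicate_append {t : ℕ} (ht : 1 ≤ t) (v : List Bool) :
    (intPeakHeights (replicate t true ++ false :: v)).head? = some (t : ℤ) := by
  induction t, ht using Nat.le_induction with
  | base => simp [intPeakHeights_cons]
  | succ t ht ih =>
    obtain ⟨t, rfl⟩ := Nat.exists_eq_add_of_le' ht
    rw [replicate_succ, cons_append, intPeakHeights_cons, head?_append, head?_map, ih]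
    simp [replicate_succ, height]

lemma eq_replicate_append_replicate_of_intPeakHeights_eq_nil {v : List Bool}
    (h : intPeakHeights v = []) : ∃ a b, v = replicate a false ++ replicate b true := by
  induction v with
  | nil => exact ⟨0, 0, rfl⟩
  | cons x v ih =>
    rw [intPeakHeights_cons, append_eq_nil_iff, map_eq_nil_iff] at h
    obtain ⟨a, b, rfl⟩ := ih h.2
    cases x
    · exact ⟨a + 1, b, rfl⟩
    · obtain rfl : a = 0 := by
        by_contra ha
        obtain ⟨a, rfl⟩ := Nat.exists_eq_succ_of_ne_zero ha
        simp [replicate_succ] at h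
      exact ⟨0, b + 1, rfl⟩

lemma forall_prefix_cons_iff {α : Type*} {P : List α → Prop} (x : α) (l : List α) :
    (∀ p, p <+: x :: l → P p) ↔ P [] ∧ ∀ q, q <+: l → P (x :: q) := by
  simp only [prefix_cons_iff]
  constructor
  · exact fun h => ⟨h [] (.inl rfl), fun q hq => h _ (.inr ⟨q, rfl, hq⟩)⟩
  · rintro ⟨h₀, h⟩ p (rfl | ⟨q, rfl, hq⟩)
    exacts [h₀, h q hq]

lemma forall_prefix_replicate_append_iff (c t : ℕ) (u : List Bool) :
    (∀ p, p <+: replicate t true ++ u → p.count false ≤ c + p.count true) ↔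
      ∀ q, q <+: u → q.count false ≤ c + t + q.count true := by
  induction t generalizing c with
  | zero => simp
  | succ t ih =>
    rw [replicate_succ, cons_append, forall_prefix_cons_iff]
    simp only [count_nil, zero_le, count_cons_self, true_and,
      ← add_assoc, add_right_comm c _ 1]
    exact ih (c + 1)

lemma isDyckWord_replicate_append_iff {t : ℕ} (ht : 1 ≤ t) (v : List Bool) :
    IsDyckWord (replicate t true ++ false :: v) ↔ IsDyckWord (replicate (t - 1) true ++ v) := by
  have hprefix := forall_prefix_replicate_append_iff 0
  simp only [zero_add] at hprefix
  rw [IsDyckWord, IsDyckWord, hprefix, hprefix, forall_prefix_cons_iff]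
  simp only [count_append, count_replicate, count_cons, count_nil]
  refine and_congr (by simp; omega) ⟨fun h q hq => ?_, fun h => ⟨by simp, fun q hq => ?_⟩⟩
  · have := h.2 q hq; simp at this; omega
  · have := h q hq; simp; omega

lemma exists_eq_replicate_true_append_false {w : List Bool} (h : false ∈ w) :
    ∃ t v, w = replicate t true ++ false :: v := by
  induction w with
  | nil => simp at h
  | cons x w ih =>
    cases x
    · exact ⟨0, w, rfl⟩
    · obtain ⟨t, v, rfl⟩ := ih (by simpa using h)
      exact ⟨t + 1, v, rfl⟩

namespace IsDyckWord

lemma exists_eq_replicate_append {w : List Bool} (hw : IsDyckWord w) (hne : w ≠ []) :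
    ∃ t v, 1 ≤ t ∧ w = replicate t true ++ false :: v := by
  have hfalse : false ∈ w := by
    by_contra h
    have := count_true_add_count_false w
    rw [hw.1, count_eq_zero.2 h] at this
    exact hne (length_eq_zero_iff.1 this.symm)
  obtain ⟨t, v, rfl⟩ := exists_eq_replicate_true_append_false hfalse
  refine ⟨t, v, Nat.one_le_iff_ne_zero.2 fun ht => ?_, rfl⟩
  subst ht
  simpa using hw.2 [false] (by simp)

lemma map_peakHeights {w : List Bool} (hw : IsDyckWord w) :
    (peakHeights w).map (Nat.cast : ℕ → ℤ) = intPeakHeights w := by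
  rw [peakHeights, intPeakHeights, map_filterMap]
  refine filterMap_congr fun k _ => ?_
  simp only [peakHeightAt?, height]
  split_ifs
  · simp [Nat.cast_sub (hw.2 _ (take_prefix _ _))]
  · rfl

lemma head?_peakHeights {t : ℕ} {v : List Bool} (hw : IsDyckWord (replicate t true ++ false :: v))
    (ht : 1 ≤ t) : (peakHeights (replicate t true ++ false :: v)).head? = some t :=
  Option.map_injective Nat.cast_injective <| by
    rw [← head?_map, hw.map_peakHeights, head?_intPeakHeights_replicate_append ht, Option.map_some]

lemma getLast?_peakHeights_eq {w u : List Bool} (hw : IsDyckWord w) (hu : IsDyckWord u)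
    (h : (intPeakHeights w).getLast? = (intPeakHeights u).getLast?) :
    (peakHeights w).getLast? = (peakHeights u).getLast? :=
  Option.map_injective Nat.cast_injective <| by
    rw [← getLast?_map, ← getLast?_map, hw.map_peakHeights, hu.map_peakHeights, h]

lemma intPeakHeights_ne_nil {t : ℕ} {v : List Bool}
    (hw : IsDyckWord (replicate t true ++ false :: v)) (hv : true ∈ v) : intPeakHeights v ≠ [] := by
  intro h
  obtain ⟨a, b, rfl⟩ := eq_replicate_append_replicate_of_intPeakHeights_eq_nil h
  have hb : b ≠ 0 := by rintro rfl; simp at hv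
  have hcount := hw.1
  have hprefix := hw.2 (replicate t true ++ false :: replicate a false) (by simp)
  simp [count_replicate] at hcount hprefix
  omega

end IsDyckWord

lemma getElem?_replicate_append_of_lt {t k : ℕ} (hk : k < t) (v : List Bool) :
    (replicate t true ++ false :: v)[k]? = some true := by
  rw [getElem?_append_left (by simpa using hk), getElem?_replicate_of_lt hk]

lemma firstPeakIdx?_replicate_append {t : ℕ} (ht : 1 ≤ t) (v : List Bool) :
    firstPeakIdx? (replicate t true ++ false :: v) = some (t - 1) := by
  have hpeak : (replicate t true ++ false :: v)[t - 1 + 1]? = some false := by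
    rw [Nat.sub_add_cancel ht, getElem?_append_right (by simp)]
    simp
  rw [firstPeakIdx?, find?_range_eq_some]
  refine ⟨?_, by simp; omega, fun k hk => ?_⟩
  · simp [getElem?_replicate_append_of_lt (by omega : t - 1 < t), hpeak]
  · simp [getElem?_replicate_append_of_lt (by omega : k + 1 < t)]

lemma deleteFirstPeak_replicate_append {t : ℕ} (ht : 1 ≤ t) (v : List Bool) :
    deleteFirstPeak (replicate t true ++ false :: v) = replicate (t - 1) true ++ v := by
  rw [deleteFirstPeak, firstPeakIdx?_replicate_append ht]
  obtain ⟨t, rfl⟩ := Nat.exists_eq_add_of_le' ht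
  simp [replicate_succ', drop_append]

lemma getLast?_intPeakHeights_replicate_append {t : ℕ} (ht : 1 ≤ t) {v : List Bool}
    (hv : intPeakHeights v ≠ []) :
    (intPeakHeights (replicate t true ++ false :: v)).getLast? =
      (intPeakHeights (replicate (t - 1) true ++ v)).getLast? := by
  rw [show replicate t true ++ false :: v = (replicate t true ++ [false]) ++ v by simp,
    getLast?_intPeakHeights_append _ hv, getLast?_intPeakHeights_append _ hv]
  congr 2
  simp [height, count_replicate, Nat.cast_sub ht]

lemma replicate_append_mem_dyckD_iff {n i j t : ℕ} (ht : 1 ≤ t) (htn : t < n) (v : List Bool) :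
    replicate t true ++ false :: v ∈ DyckD n i j ↔
      i = t ∧ IsDyckWord (replicate (t - 1) true ++ v) ∧
        (replicate (t - 1) true ++ v).count true = n - 1 ∧
        (peakHeights (replicate (t - 1) true ++ v)).getLast? = some j := by
  have hcount : (replicate t true ++ false :: v).count true =
      (replicate (t - 1) true ++ v).count true + 1 := by
    simp; omega
  have hlast (hw : IsDyckWord (replicate t true ++ false :: v))
      (hn : (replicate t true ++ false :: v).count true = n) :
      (peakHeights (replicate t true ++ false :: v)).getLast? =
        (peakHeights (replicate (t - 1) true ++ v)).getLast? := by
    have hv : true ∈ v := by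
      by_contra h
      simp [count_eq_zero.2 h] at hn
      omega
    exact hw.getLast?_peakHeights_eq ((isDyckWord_replicate_append_iff ht v).1 hw)
      (getLast?_intPeakHeights_replicate_append ht (hw.intPeakHeights_ne_nil hv))
  constructor
  · rintro ⟨hw, hn, hi, hj⟩
    refine ⟨?_, (isDyckWord_replicate_append_iff ht v).1 hw, by omega, hlast hw hn ▸ hj⟩
    simpa [hw.head?_peakHeights ht] using hi.symm
  · rintro ⟨rfl, hu, hn, hj⟩
    have hw := (isDyckWord_replicate_append_iff ht v).2 hu
    exact ⟨hw, by omega, hw.head?_peakHeights ht, hlast hw (by omega) ▸ hj⟩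

lemma eq_replicate_append_of_mem_dyckD {n i j : ℕ} {w : List Bool} (hn : 1 ≤ n)
    (hw : w ∈ DyckD n i j) : 1 ≤ i ∧ ∃ v, w = replicate i true ++ false :: v := by
  obtain ⟨hdyck, hcount, hi, -⟩ := hw
  obtain ⟨t, v, ht, rfl⟩ :=
    hdyck.exists_eq_replicate_append (by rintro rfl; simp at hcount; omega)
  obtain rfl : i = t := by simpa [hdyck.head?_peakHeights ht] using hi.symm
  exact ⟨ht, v, rfl⟩

lemma le_of_replicate_append_eq {a s : ℕ} {x y : List Bool}
    (h : replicate a true ++ x = replicate s true ++ false :: y) : a ≤ s := by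
  induction a generalizing s with
  | zero => exact Nat.zero_le _
  | succ a ih =>
    cases s with
    | zero => simp [replicate_succ] at h
    | succ s => exact Nat.succ_le_succ (ih (by simpa [replicate_succ] using h))

lemma mapsTo_deleteFirstPeak {n i j : ℕ} (hi : 1 ≤ i) (hin : i < n) :
    Set.MapsTo deleteFirstPeak (DyckD n i j)
      (⋃ s ∈ Finset.Icc (i - 1) (n - 1), DyckD (n - 1) s j) := by
  intro w hw
  obtain ⟨-, v, rfl⟩ := eq_replicate_append_of_mem_dyckD (by omega) hw
  obtain ⟨-, hu, hn, hj⟩ := (replicate_append_mem_dyckD_iff hi hin v).1 hw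
  rw [deleteFirstPeak_replicate_append hi]
  obtain ⟨s, v', hs, huv⟩ :=
    hu.exists_eq_replicate_append (by intro h; rw [h] at hn; simp at hn; omega)
  have hsn : s ≤ n - 1 := by rw [← hn, huv]; simp
  refine Set.mem_iUnion₂.2
    ⟨s, Finset.mem_Icc.2 ⟨le_of_replicate_append_eq huv, hsn⟩, hu, hn, ?_, hj⟩
  rw [huv] at hu ⊢
  exact hu.head?_peakHeights hs

lemma injOn_deleteFirstPeak {n i j : ℕ} (hn : 1 ≤ n) :
    Set.InjOn deleteFirstPeak (DyckD n i j) := by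
  intro w₁ h₁ w₂ h₂ h
  obtain ⟨hi, v₁, rfl⟩ := eq_replicate_append_of_mem_dyckD hn h₁
  obtain ⟨-, v₂, rfl⟩ := eq_replicate_append_of_mem_dyckD hn h₂
  rw [deleteFirstPeak_replicate_append hi, deleteFirstPeak_replicate_append hi] at h
  rw [append_cancel_left h]

lemma surjOn_deleteFirstPeak {n i j : ℕ} (hi : 1 ≤ i) (hin : i < n) :
    Set.SurjOn deleteFirstPeak (DyckD n i j)
      (⋃ s ∈ Finset.Icc (i - 1) (n - 1), DyckD (n - 1) s j) := by
  intro u hu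
  obtain ⟨s, hs, hu⟩ := Set.mem_iUnion₂.1 hu
  obtain ⟨-, v, rfl⟩ := eq_replicate_append_of_mem_dyckD (by omega) hu
  have huv : replicate s true ++ false :: v =
      replicate (i - 1) true ++ (replicate (s - (i - 1)) true ++ false :: v) := by
    rw [← append_assoc, ← replicate_add, Nat.add_sub_cancel' (Finset.mem_Icc.1 hs).1]
  refine ⟨replicate i true ++ false :: (replicate (s - (i - 1)) true ++ false :: v), ?_, ?_⟩
  · obtain ⟨hdyck, hn, -, hj⟩ := hu
    rw [huv] at hdyck hn hj
    exact (replicate_append_mem_dyckD_iff hi hin _).2 ⟨rfl, hdyck, hn, hj⟩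
  · rw [deleteFirstPeak_replicate_append hi, huv]

lemma dyckD_finite (n i j : ℕ) : (DyckD n i j).Finite :=
  (List.finite_length_eq Bool (2 * n)).subset fun w ⟨hw, hn, _⟩ => by
    show w.length = 2 * n
    rw [← count_true_add_count_false, ← hw.1, hn]
    omega

lemma pairwiseDisjoint_dyckD (n j : ℕ) (S : Set ℕ) :
    S.PairwiseDisjoint fun s => DyckD n s j :=
  fun _ _ _ _ hss' => Set.disjoint_left.2 fun _ hw hw' =>
    hss' (Option.some_injective _ (hw.2.2.1.symm.trans hw'.2.2.1))

theorem deleteFirstPeak_bijOn_and_card_general (n : ℕ) (i j : ℕ)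
    (hi : i ∈ Finset.Icc 1 (n - 1)) :
    Set.BijOn deleteFirstPeak (DyckD n i j)
      (⋃ s ∈ Finset.Icc (i - 1) (n - 1), DyckD (n - 1) s j) ∧
    (DyckD n i j).ncard = ∑ s ∈ Finset.Icc (i - 1) (n - 1), (DyckD (n - 1) s j).ncard := by
  obtain ⟨hi1, hin⟩ := Finset.mem_Icc.1 hi
  have hbij : Set.BijOn deleteFirstPeak (DyckD n i j)
      (⋃ s ∈ Finset.Icc (i - 1) (n - 1), DyckD (n - 1) s j) :=
    ⟨mapsTo_deleteFirstPeak hi1 (by omega), injOn_deleteFirstPeak (by omega),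
      surjOn_deleteFirstPeak hi1 (by omega)⟩
  refine ⟨hbij, hbij.ncard_eq.trans ?_⟩
  rw [← finsum_mem_coe_finset]
  exact (Finset.finite_toSet _).ncard_biUnion (fun s _ => dyckD_finite _ _ _)
    (pairwiseDisjoint_dyckD _ _ _)

/-- For `n ≥ 2` and `i, j ∈ {1, …, n−1}`, deleting the first peak is a
bijection from `D_n(i,j)` onto `⋃_{s=i−1}^{n−1} D_{n−1}(s,j)`; consequently
`|D_n(i,j)| = Σ_{s=i−1}^{n−1} |D_{n−1}(s,j)|` (the set `D_{n−1}(0,j)` being empty). -/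
theorem deleteFirstPeak_bijOn_and_card (n : ℕ) (hn : 2 ≤ n) (i j : ℕ)
    (hi : i ∈ Finset.Icc 1 (n - 1)) (hj : j ∈ Finset.Icc 1 (n - 1)) :
    Set.BijOn deleteFirstPeak (DyckD n i j)
      (⋃ s ∈ Finset.Icc (i - 1) (n - 1), DyckD (n - 1) s j) ∧
    (DyckD n i j).ncard = ∑ s ∈ Finset.Icc (i - 1) (n - 1), (DyckD (n - 1) s j).ncard :=
  deleteFirstPeak_bijOn_and_card_general n i j hi
end

section
/- For every integer n ≥ 2 and every j ∈ {1, …, n−1}, the entry c^{(n)}_{1,j} of the matrix C_n equals the Catalan triangle entry c_{n−2, n−1−j}; explicitly, c^{(n)}_{1,j} = ((2n−3−j)! · j) / ((n−1−j)! · (n−1)!). -/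
/-!
The columns of `C_{N+1}` have a closed form: for `0 ≤ i ≤ N` and `1 ≤ j ≤ N`,
`c^{(N+1)}_{i,j} = C(2N-i-j, N-i) - C(2N-i-j, N)`, a difference of binomial coefficients of
ballot type. It is checked by induction on `N`: `τ` takes suffix sums of a column, and by
Pascal's rule the closed form telescopes along a column. In row `i = 1` the difference is the
Catalan-triangle entry `C(a+b, b) - C(a+b, b+1) = (a+b)! (b+1-a) / (a! (b+1)!)`.
-/

open Finset Nat

/-- The entries `c^{(n)}_{i,j}` of the matrices `C_n`, defined by `C_1 = (1)` and
`C_{n+1} = (τ C_n) ⊕ (1)`, where `(τ A)_{i,j} = Σ_{s=i-1}^{n} a_{s,j}` (with the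
convention `a_{0,j} = 0`). Entries with an index outside `{1, …, n}` are `0`. -/
def cMat : ℕ → ℕ → ℕ → ℕ
  | 0, _, _ => 0
  | 1, i, j => if i = 1 ∧ j = 1 then 1 else 0
  | n + 2, i, j =>
      if 1 ≤ i ∧ i ≤ n + 1 ∧ 1 ≤ j ∧ j ≤ n + 1 then
        ∑ s ∈ Finset.Icc (i - 1) (n + 1), cMat (n + 1) s j
      else if i = n + 2 ∧ j = n + 2 then 1 else 0

theorem Nat.choose_sub_choose_succ_mul_factorial (a b : ℕ) :
    (((a + b).choose b : ℤ) - (a + b).choose (b + 1)) * (a ! * (b + 1)!) =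
      (a + b)! * ((b + 1 : ℤ) - a) := by
  have h₁ := Nat.choose_succ_right_eq (a + b) b
  have h₂ := Nat.add_choose_mul_factorial_mul_factorial a b
  rw [Nat.add_sub_cancel] at h₁
  rw [Nat.factorial_succ]
  zify at h₁ h₂
  push_cast
  linear_combination (-((a ! : ℤ) * b !)) * h₁ + ((b + 1 : ℤ) - a) * h₂

def cMatFormula (N i j : ℕ) : ℤ :=
  (2 * N - i - j).choose (N - i) - (2 * N - i - j).choose N

lemma cMatFormula_zero_left (N j : ℕ) : cMatFormula N 0 j = 0 := by
  simp [cMatFormula]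

lemma cMatFormula_self_left {N j : ℕ} (hj : 1 ≤ j) (hjN : j ≤ N) :
    cMatFormula N N j = 1 := by
  rw [cMatFormula, Nat.sub_self, Nat.choose_zero_right, Nat.choose_eq_zero_of_lt (by omega)]
  norm_num

lemma cMatFormula_self_right {N i : ℕ} (hi : 1 ≤ i) (hiN : i ≤ N) :
    cMatFormula N i N = 1 := by
  rw [cMatFormula, show 2 * N - i - N = N - i by omega, Nat.choose_self,
    Nat.choose_eq_zero_of_lt (by omega)]
  norm_num

lemma cMatFormula_add_cMatFormula {N i j : ℕ} (hi : i < N) (hj : j ≤ N) :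
    cMatFormula N i j + cMatFormula (N + 1) (i + 2) j = cMatFormula (N + 1) (i + 1) j := by
  obtain ⟨k, rfl⟩ : ∃ k, N = i + k + 1 := ⟨N - i - 1, by omega⟩
  set x := 2 * (i + k + 1) - i - j
  simp only [cMatFormula]
  rw [show 2 * (i + k + 1 + 1) - (i + 2) - j = x by omega,
    show 2 * (i + k + 1 + 1) - (i + 1) - j = x + 1 by omega,
    show i + k + 1 + 1 - (i + 2) = k by omega, show i + k + 1 + 1 - (i + 1) = k + 1 by omega,
    show i + k + 1 - i = k + 1 by omega, Nat.choose_succ_succ', Nat.choose_succ_succ' x]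
  push_cast
  ring

lemma sum_Icc_cMatFormula {N j : ℕ} (hj : 1 ≤ j) (hjN : j ≤ N) {i : ℕ} (hi : i ≤ N) :
    ∑ s ∈ Icc i N, cMatFormula N s j = cMatFormula (N + 1) (i + 1) j := by
  induction hk : N - i generalizing i with
  | zero =>
    obtain rfl : i = N := by omega
    rw [Icc_self, sum_singleton, cMatFormula_self_left hj hjN, cMatFormula_self_left hj (by omega)]
  | succ k ih =>
    rw [← add_sum_Ioc_eq_sum_Icc hi, ← Icc_add_one_left_eq_Ioc, ih (by omega) (by omega),
      cMatFormula_add_cMatFormula (by omega) hjN]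

lemma cMat_zero_left (n j : ℕ) : cMat n 0 j = 0 := by
  rcases n with _ | _ | n <;> simp [cMat]

lemma cMat_self_left {N j : ℕ} (hj : j ≤ N) : cMat (N + 1) (N + 1) j = 0 := by
  rcases N with _ | N <;> simp [cMat] <;> omega

lemma cMat_self_right (N s : ℕ) : cMat (N + 1) s (N + 1) = if s = N + 1 then 1 else 0 := by
  rcases N with _ | N
  · simp [cMat]
  · simp only [cMat]
    rw [if_neg (by omega)]
    by_cases h : s = N + 2 <;> simp [h]

lemma cMat_add_two {N i j : ℕ} (hi : 1 ≤ i) (hiN : i ≤ N + 1) (hj : 1 ≤ j)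
    (hjN : j ≤ N + 1) :
    cMat (N + 2) i j = ∑ s ∈ Icc (i - 1) (N + 1), cMat (N + 1) s j := by
  rw [cMat, if_pos ⟨hi, hiN, hj, hjN⟩]

theorem cMat_succ_eq_cMatFormula {N i j : ℕ} (hj : 1 ≤ j) (hjN : j ≤ N) (hi : i ≤ N) :
    (cMat (N + 1) i j : ℤ) = cMatFormula N i j := by
  induction N generalizing i j with
  | zero => omega
  | succ N ih =>
    rcases i.eq_zero_or_pos with rfl | hi₀
    · rw [cMat_zero_left, cMatFormula_zero_left, Nat.cast_zero]
    rw [cMat_add_two hi₀ hi hj hjN]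
    push_cast
    rcases hjN.lt_or_eq with hjN | rfl
    · rw [sum_Icc_succ_top (by omega), cMat_self_left (by omega), Nat.cast_zero, add_zero,
        sum_congr rfl fun s hs => ih hj (by omega) (mem_Icc.mp hs).2,
        sum_Icc_cMatFormula hj (by omega) (by omega), Nat.sub_add_cancel hi₀]
    · simp_rw [cMat_self_right, cMatFormula_self_right hi₀ hi]
      simp only [Nat.cast_ite, Nat.cast_one, Nat.cast_zero, sum_ite_eq', mem_Icc]
      rw [if_pos ⟨by omega, le_rfl⟩]

theorem cMat_first_row_general (n : ℕ) (j : ℕ) (hj : j ∈ Finset.Icc 1 (n - 1)) :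
    cMat n 1 j =
      (2 * n - 3 - j).factorial * j / ((n - 1 - j).factorial * (n - 1).factorial) := by
  obtain ⟨hj₁, hjn⟩ := mem_Icc.mp hj
  obtain ⟨M, rfl⟩ : ∃ M, n = M + 1 + 1 := ⟨n - 2, by omega⟩
  have hcol := cMat_succ_eq_cMatFormula (N := M + 1) (i := 1) hj₁ (by omega) (by omega)
  rw [cMatFormula, show 2 * (M + 1) - 1 - j = M + 1 - j + M by omega,
    show M + 1 - 1 = M by omega] at hcol
  have hballot := Nat.choose_sub_choose_succ_mul_factorial (M + 1 - j) M
  have hdiff : ((M : ℤ) + 1 - (M + 1 - j : ℕ)) = j := by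
    push_cast [Nat.cast_sub (show j ≤ M + 1 by omega)]
    ring
  rw [← hcol, hdiff] at hballot
  rw [show 2 * (M + 1 + 1) - 3 - j = M + 1 - j + M by omega, Nat.add_sub_cancel]
  exact (Nat.div_eq_of_eq_mul_left (by positivity) (by exact_mod_cast hballot.symm)).symm

/-- For `n ≥ 2` and `j ∈ {1, …, n−1}`, the entry `c^{(n)}_{1,j}`
equals the Catalan triangle entry `c_{n−2, n−1−j} = ((2n−3−j)! · j)/((n−1−j)!·(n−1)!)`. -/
theorem cMat_first_row (n : ℕ) (hn : 2 ≤ n) (j : ℕ) (hj : j ∈ Finset.Icc 1 (n - 1)) :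
    cMat n 1 j =
      (2 * n - 3 - j).factorial * j / ((n - 1 - j).factorial * (n - 1).factorial) :=
  cMat_first_row_general n j hj
end
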